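/- arXiv:2308.04606 — 5 statements merged into one kernel-verified Lean document; each statement's English description precedes it below -/
import Mathlib

section
/- Let A ∈ ℂ^{n×n}, let v ∈ ℂⁿ be nonzero with Av = μv for some μ ∈ ℂ, and let q ∈ ℂⁿ. Then the characteristic polynomials satisfy the identity (X − μ)·charpoly(A + v qᴴ) = (X − (μ + qᴴv))·charpoly(A); in particular the multiset of eigenvalues of A + v qᴴ is obtained from that of A by replacing one copy of μ with μ + qᴴv. -/
open Matrix Polynomial

noncomputable section

lemma eval_charpoly_aux {m : Type*} [Fintype m] [DecidableEq m] {R : Type*} [CommRing R]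
    (A : Matrix m m R) (x : R) :
    (A.charpoly).eval x = (Matrix.scalar m x - A).det := by
  rw [Matrix.charpoly, ← coe_evalRingHom, RingHom.map_det]
  congr 1
  ext i j
  by_cases h : i = j <;>
    simp [Matrix.charmatrix_apply, Matrix.scalar_apply, Matrix.diagonal_apply, h]

lemma vecMulVec_neg_left {m : Type*} {R : Type*} [CommRing R] (u w : m → R) :
    Matrix.vecMulVec (-u) w = -Matrix.vecMulVec u w := by
  ext i j
  simp [Matrix.vecMulVec_apply]

theorem stmt1 (n : ℕ) (A : Matrix (Fin n) (Fin n) ℂ) (v q : Fin n → ℂ) (hv : v ≠ 0)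
    (μ : ℂ) (hμ : A *ᵥ v = μ • v) :
    (X - C μ) * (A + Matrix.vecMulVec v (star q)).charpoly =
      (X - C (μ + star q ⬝ᵥ v)) * A.charpoly ∧
    μ ::ₘ (A + Matrix.vecMulVec v (star q)).charpoly.roots =
      (μ + star q ⬝ᵥ v) ::ₘ A.charpoly.roots := by
  set c : ℂ := star q ⬝ᵥ v with hc
  set B : Matrix (Fin n) (Fin n) ℂ := A + Matrix.vecMulVec v (star q) with hB
  -- pointwise identity on the cofinite set where `scalar x - A` is invertible
  have key : ∀ x : ℂ, (Matrix.scalar (Fin n) x - A).det ≠ 0 →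
      (x - μ) * (Matrix.scalar (Fin n) x - B).det
        = (x - (μ + c)) * (Matrix.scalar (Fin n) x - A).det := by
    intro x hdet
    set M : Matrix (Fin n) (Fin n) ℂ := Matrix.scalar (Fin n) x - A with hM
    have hMu : IsUnit M.det := isUnit_iff_ne_zero.mpr hdet
    have hMv : M *ᵥ v = (x - μ) • v := by
      rw [hM, Matrix.sub_mulVec, hμ, sub_smul]
      congr 1
      ext i
      simp [Matrix.scalar_apply, Matrix.mulVec_diagonal]
    have hxμ : x - μ ≠ 0 := by
      intro h0
      have : v = 0 := by
        have h1 : M⁻¹ *ᵥ (M *ᵥ v) = v := by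
          rw [Matrix.mulVec_mulVec, Matrix.nonsing_inv_mul M hMu, Matrix.one_mulVec]
        rw [hMv, h0, zero_smul, Matrix.mulVec_zero] at h1
        exact h1.symm
      exact hv this
    have hinv : M⁻¹ *ᵥ v = (x - μ)⁻¹ • v := by
      have h1 : M⁻¹ *ᵥ (M *ᵥ v) = v := by
        rw [Matrix.mulVec_mulVec, Matrix.nonsing_inv_mul M hMu, Matrix.one_mulVec]
      rw [hMv, Matrix.mulVec_smul] at h1
      have h2 := congrArg (fun w => (x - μ)⁻¹ • w) h1
      simpa [smul_smul, inv_mul_cancel₀ hxμ] using h2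
    have hsplit : Matrix.scalar (Fin n) x - B
        = M + Matrix.replicateCol (Fin 1) (-v) * Matrix.replicateRow (Fin 1) (star q) := by
      rw [show Matrix.replicateCol (Fin 1) (-v) * Matrix.replicateRow (Fin 1) (star q) = Matrix.vecMulVec (-v) (star q) from (Matrix.vecMulVec_eq (Fin 1) _ _).symm, vecMulVec_neg_left, hB, hM]
      abel
    rw [hsplit, Matrix.det_add_mul _ _ hMu]
    have hrow : (1 + Matrix.replicateRow (Fin 1) (star q) * M⁻¹ * Matrix.replicateCol (Fin 1) (-v)).det
        = 1 - (x - μ)⁻¹ * c := by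
      rw [Matrix.det_fin_one]
      have : (Matrix.replicateRow (Fin 1) (star q) * M⁻¹ * Matrix.replicateCol (Fin 1) (-v)) 0 0
          = (star q ᵥ* M⁻¹) ⬝ᵥ (-v) := by
        rw [← Matrix.replicateRow_vecMul, Matrix.replicateRow_mul_replicateCol_apply]
      rw [Matrix.add_apply, this, Matrix.one_apply_eq, dotProduct_neg,
        ← Matrix.dotProduct_mulVec, hinv, dotProduct_smul, smul_eq_mul, ← hc]
      ring
    rw [hrow]
    field_simp
    ring
  -- the polynomial identity
  have hmain : (X - C μ) * B.charpoly = (X - C (μ + c)) * A.charpoly := by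
    have hA0 : A.charpoly ≠ 0 := (Matrix.charpoly_monic A).ne_zero
    rw [← sub_eq_zero]
    by_contra hp
    have hfin : {x : ℂ | A.charpoly.IsRoot x}.Finite := Polynomial.finite_setOf_isRoot hA0
    have hinf : {x : ℂ | A.charpoly.IsRoot x}ᶜ.Infinite := Set.Finite.infinite_compl hfin
    have hsub : {x : ℂ | A.charpoly.IsRoot x}ᶜ ⊆
        {x : ℂ | ((X - C μ) * B.charpoly - (X - C (μ + c)) * A.charpoly).IsRoot x} := by
      intro x hx
      have hdet : (Matrix.scalar (Fin n) x - A).det ≠ 0 := by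
        rw [← eval_charpoly_aux]
        exact hx
      have := key x hdet
      simp only [Set.mem_setOf_eq, IsRoot, eval_sub, eval_mul, eval_X, eval_C,
        eval_charpoly_aux]
      rw [sub_eq_zero]
      exact this
    have : {x : ℂ | ((X - C μ) * B.charpoly - (X - C (μ + c)) * A.charpoly).IsRoot x}.Finite :=
      Polynomial.finite_setOf_isRoot hp
    exact (hinf.mono hsub) this
  refine ⟨hmain, ?_⟩
  have hA0 : A.charpoly ≠ 0 := (Matrix.charpoly_monic A).ne_zero
  have hB0 : B.charpoly ≠ 0 := (Matrix.charpoly_monic B).ne_zero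
  have h1 : ((X - C μ) * B.charpoly).roots = ((X - C (μ + c)) * A.charpoly).roots := by
    rw [hmain]
  rw [Polynomial.roots_mul (mul_ne_zero (X_sub_C_ne_zero μ) hB0),
    Polynomial.roots_mul (mul_ne_zero (X_sub_C_ne_zero (μ + c)) hA0),
    roots_X_sub_C, roots_X_sub_C] at h1
  simpa [Multiset.singleton_add] using h1
end
end

section
/- Let u, v ∈ ℂⁿ be unit vectors (‖u‖ = ‖v‖ = 1). Then the operator norm (induced by the Euclidean norm) of the matrix u uᴴ − v vᴴ equals √(1 − |⟨u,v⟩|²), where ⟨u,v⟩ = vᴴu. -/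
open Matrix
open scoped InnerProductSpace

set_option maxHeartbeats 1000000
set_option synthInstance.maxHeartbeats 400000
noncomputable section

private lemma vmv_mul {n : ℕ} (a b c d : Fin n → ℂ) :
    vecMulVec a b * vecMulVec c d = (b ⬝ᵥ c) • vecMulVec a d := by
  ext i j
  simp only [mul_apply, vecMulVec_apply, Matrix.smul_apply, smul_eq_mul, dotProduct, Finset.sum_mul]
  exact Finset.sum_congr rfl fun k _ => by ring

private lemma vmv_mulVec {n : ℕ} (a b x : Fin n → ℂ) :
    (vecMulVec a b) *ᵥ x = (b ⬝ᵥ x) • a := by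
  ext i
  simp only [mulVec, dotProduct, vecMulVec_apply, Pi.smul_apply, smul_eq_mul, Finset.sum_mul]
  exact Finset.sum_congr rfl fun k _ => by ring

theorem EuclideanSpace.inner_piLp_equiv_symm {n : ℕ} (x y : Fin n → ℂ) :
    ⟪(WithLp.equiv 2 (Fin n → ℂ)).symm x, (WithLp.equiv 2 (Fin n → ℂ)).symm y⟫_ℂ =
      star x ⬝ᵥ y := by
  rw [WithLp.equiv_symm_apply, EuclideanSpace.inner_toLp_toLp, dotProduct_comm]

theorem Matrix.toEuclideanCLM_piLp_equiv_symm {n : ℕ} (A : Matrix (Fin n) (Fin n) ℂ)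
    (x : Fin n → ℂ) :
    Matrix.toEuclideanCLM (𝕜 := ℂ) A ((WithLp.equiv 2 (Fin n → ℂ)).symm x) =
      (WithLp.equiv 2 (Fin n → ℂ)).symm (Matrix.toLin' A x) := rfl

theorem WithLp.equiv_symm_sub {n : ℕ} (x y : Fin n → ℂ) :
    (WithLp.equiv 2 (Fin n → ℂ)).symm (x - y) =
      (WithLp.equiv 2 (Fin n → ℂ)).symm x - (WithLp.equiv 2 (Fin n → ℂ)).symm y := rfl

theorem WithLp.equiv_symm_smul {n : ℕ} (c : ℂ) (x : Fin n → ℂ) :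
    (WithLp.equiv 2 (Fin n → ℂ)).symm (c • x) = c • (WithLp.equiv 2 (Fin n → ℂ)).symm x := rfl

private lemma star_vmv {n : ℕ} (a : Fin n → ℂ) :
    star (vecMulVec a (star a)) = vecMulVec a (star a) := by
  ext i j
  simp [vecMulVec_apply, conjTranspose_apply, mul_comm]

theorem stmt2 (n : ℕ) (u v : Fin n → ℂ)
    (hu : ‖(EuclideanSpace.equiv (Fin n) ℂ).symm u‖ = 1)
    (hv : ‖(EuclideanSpace.equiv (Fin n) ℂ).symm v‖ = 1) :
    ‖Matrix.toEuclideanCLM (𝕜 := ℂ)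
        (Matrix.vecMulVec u (star u) - Matrix.vecMulVec v (star v))‖ =
      Real.sqrt (1 - ‖star v ⬝ᵥ u‖ ^ 2) := by
  set c : ℂ := star v ⬝ᵥ u with hc
  set u' : EuclideanSpace ℂ (Fin n) := (WithLp.equiv 2 (Fin n → ℂ)).symm u with hu'def
  set v' : EuclideanSpace ℂ (Fin n) := (WithLp.equiv 2 (Fin n → ℂ)).symm v with hv'def
  have hu1 : ‖u'‖ = 1 := hu
  have hv1 : ‖v'‖ = 1 := hv
  have huu : star u ⬝ᵥ u = 1 := by
    rw [← EuclideanSpace.inner_piLp_equiv_symm, ← hu'def, inner_self_eq_norm_sq_to_K, hu1]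
    norm_num
  have hvv : star v ⬝ᵥ v = 1 := by
    rw [← EuclideanSpace.inner_piLp_equiv_symm, ← hv'def, inner_self_eq_norm_sq_to_K, hv1]
    norm_num
  have hvu : (⟪v', u'⟫_ℂ) = c := by
    rw [hu'def, hv'def, EuclideanSpace.inner_piLp_equiv_symm]
  have huv : star u ⬝ᵥ v = starRingEnd ℂ c := by
    rw [← EuclideanSpace.inner_piLp_equiv_symm, ← hu'def, ← hv'def, ← inner_conj_symm, hvu]
  set M : Matrix (Fin n) (Fin n) ℂ := vecMulVec u (star u) - vecMulVec v (star v) with hM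
  have key : M * M * M = ((1 : ℂ) - c * starRingEnd ℂ c) • M := by
    simp only [hM, sub_mul, mul_sub, vmv_mul, huu, hvv, huv, ← hc, smul_mul_assoc,
      mul_smul_comm, vmv_mul, smul_smul, one_smul, smul_sub]
    module
  set T := Matrix.toEuclideanCLM (𝕜 := ℂ) M with hT
  have hTsa : IsSelfAdjoint T := by
    rw [_root_.IsSelfAdjoint, ← map_star]
    congr 1
    simp only [hM, star_sub, star_vmv]
  have hT3 : T * T * T = ((1 : ℂ) - c * starRingEnd ℂ c) • T := by
    rw [hT, ← _root_.map_mul, ← _root_.map_mul, key, _root_.map_smul]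
  -- lower bound vector
  have hTu : T u' = u' - c • v' := by
    rw [hT, hu'def, Matrix.toEuclideanCLM_piLp_equiv_symm, Matrix.toLin'_apply, hM,
      Matrix.sub_mulVec, vmv_mulVec, vmv_mulVec, huu, ← hc, one_smul]
    rw [WithLp.equiv_symm_sub, WithLp.equiv_symm_smul, ← hv'def]
  have hTu_norm : ‖T u'‖ ^ 2 = 1 - ‖c‖ ^ 2 := by
    rw [hTu, @norm_sub_sq ℂ, inner_smul_right, hu1, norm_smul, hv1]
    have : (⟪u', v'⟫_ℂ) = starRingEnd ℂ c := by rw [← inner_conj_symm, hvu]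
    rw [this, Complex.mul_conj]
    simp only [Complex.ofReal_re, RCLike.ofReal_re, RCLike.re_to_complex, Complex.normSq_eq_norm_sq, one_pow, mul_one]
    ring
  have hs_nonneg : (0:ℝ) ≤ 1 - ‖c‖ ^ 2 := hTu_norm ▸ sq_nonneg _
  have hlow : 1 - ‖c‖ ^ 2 ≤ ‖T‖ ^ 2 := by
    rw [← hTu_norm]
    have h := T.le_opNorm u'
    rw [hu1, mul_one] at h
    exact pow_le_pow_left₀ (norm_nonneg _) h 2
  -- C* identities
  have hnsq : ‖T * T‖ = ‖T‖ * ‖T‖ := by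
    have h := CStarRing.norm_star_mul_self (x := T)
    rwa [hTsa.star_eq] at h
  have hT2sa : _root_.IsSelfAdjoint (T * T) := by
    rw [_root_.IsSelfAdjoint, StarMul.star_mul, hTsa.star_eq]
  have hnsq2 : ‖(T * T) * (T * T)‖ = ‖T * T‖ * ‖T * T‖ := by
    have h := CStarRing.norm_star_mul_self (x := T * T)
    rwa [hT2sa.star_eq] at h
  have hcast : ((1 : ℂ) - c * starRingEnd ℂ c) = ((1 - ‖c‖ ^ 2 : ℝ) : ℂ) := by
    rw [Complex.mul_conj, Complex.normSq_eq_norm_sq]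
    push_cast
    ring
  have hT4 : (T * T) * (T * T) = ((1 - ‖c‖ ^ 2 : ℝ) : ℂ) • (T * T) := by
    calc (T * T) * (T * T) = (T * T * T) * T := (mul_assoc (T * T) T T).symm
    _ = (((1 : ℂ) - c * starRingEnd ℂ c) • T) * T := by rw [hT3]
    _ = ((1 - ‖c‖ ^ 2 : ℝ) : ℂ) • (T * T) := by rw [hcast, smul_mul_assoc]
  have hn4 : ‖T‖ ^ 4 = (1 - ‖c‖ ^ 2) * ‖T‖ ^ 2 := by
    have h1 : ‖(T * T) * (T * T)‖ = ‖T‖ ^ 4 := by rw [hnsq2, hnsq]; ring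
    have h2 : ‖((1 - ‖c‖ ^ 2 : ℝ) : ℂ) • (T * T)‖ = (1 - ‖c‖ ^ 2) * ‖T‖ ^ 2 := by
      rw [norm_smul ((1 - ‖c‖ ^ 2 : ℝ) : ℂ) (T * T), hnsq,
        Complex.norm_real, Real.norm_of_nonneg hs_nonneg]
      ring
    rw [← h1, hT4, h2]
  have hfinal : ‖T‖ ^ 2 = 1 - ‖c‖ ^ 2 := by
    nlinarith [norm_nonneg T, sq_nonneg (‖T‖ ^ 2 - (1 - ‖c‖ ^ 2))]
  rw [← hfinal, Real.sqrt_sq (norm_nonneg T)]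
end
end

section
/- Let x₀, x₁, x₂ ∈ ℂⁿ be unit vectors and set z₁ = ⟨x₂,x₁⟩, z₂ = ⟨x₁,x₀⟩, z₃ = ⟨x₂,x₀⟩, and assume |z₁| < 1 and |z₂| < 1. Let P̂₁ be the orthogonal projection matrix onto span_ℂ{x₀,x₁} and P̂₂ the orthogonal projection matrix onto span_ℂ{x₁,x₂}. Then the operator norm of P̂₂ − P̂₁ equals √(1 − |z₁z₂ − z₃|² / ((1 − |z₁|²)(1 − |z₂|²))). -/
set_option maxHeartbeats 1000000
set_option synthInstance.maxHeartbeats 200000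

noncomputable section

/-- The orthogonal projection onto a subspace of `ℂⁿ`, as an operator on the whole space. -/
def projCLM {n : ℕ} (K : Submodule ℂ (EuclideanSpace ℂ (Fin n))) :
    EuclideanSpace ℂ (Fin n) →L[ℂ] EuclideanSpace ℂ (Fin n) :=
  K.subtypeL.comp (K.orthogonalProjection)

lemma proj_pair {n : ℕ} {e f : EuclideanSpace ℂ (Fin n)} (he : ‖e‖ = 1) (hf : ‖f‖ = 1)
    (hef : (inner ℂ e f : ℂ) = 0) (x : EuclideanSpace ℂ (Fin n)) :
    projCLM (Submodule.span ℂ {e, f}) x = (inner ℂ e x : ℂ) • e + (inner ℂ f x : ℂ) • f := by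
  have hee : (inner ℂ e e : ℂ) = 1 := by
    rw [inner_self_eq_norm_sq_to_K, he]; norm_num
  have hff : (inner ℂ f f : ℂ) = 1 := by
    rw [inner_self_eq_norm_sq_to_K, hf]; norm_num
  have hfe : (inner ℂ f e : ℂ) = 0 := by
    rw [← inner_conj_symm, hef, map_zero]
  simp only [projCLM, ContinuousLinearMap.comp_apply, Submodule.subtypeL_apply,
    ContinuousLinearMap.coe_coe]
  rw [← Submodule.starProjection_apply]
  apply Submodule.eq_starProjection_of_mem_of_inner_eq_zero
  · exact Submodule.mem_span_pair.2 ⟨_, _, rfl⟩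
  · intro y hy
    obtain ⟨c, d, rfl⟩ := Submodule.mem_span_pair.1 hy
    simp only [inner_sub_left, inner_add_left, inner_add_right, inner_smul_left,
      inner_smul_right, ← inner_conj_symm x e, ← inner_conj_symm x f, hee, hff, hef, hfe]
    ring

lemma calc1 (a β c : ℂ) (σ : ℝ) (h : σ^2 = 1 - ‖c‖^2) :
    ‖((starRingEnd ℂ) c * a + (σ:ℂ)*β)*c - a‖^2 + ‖(((starRingEnd ℂ) c * a + (σ:ℂ)*β))*(σ:ℂ)‖^2
      = σ^2 * (‖a‖^2 + ‖β‖^2) := by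
  have h' : σ^2 = 1 - (c.re^2 + c.im^2) := by
    rw [h, Complex.sq_norm, Complex.normSq_apply]; ring
  simp only [Complex.sq_norm, Complex.normSq_apply, Complex.sub_re, Complex.sub_im,
    Complex.add_re, Complex.add_im, Complex.mul_re, Complex.mul_im, Complex.conj_re,
    Complex.conj_im, Complex.ofReal_re, Complex.ofReal_im]
  linear_combination ((a.re^2+a.im^2)*(c.re^2+c.im^2-1) + (β.re^2+β.im^2)*σ^2
    + 2*σ*((c.re*a.re + c.im*a.im)*β.re + (c.re*a.im - c.im*a.re)*β.im)) * h'

lemma orth_expand {n : ℕ} {u v : EuclideanSpace ℂ (Fin n)} (hu : ‖u‖ = 1) (hv : ‖v‖ = 1)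
    (huv : (inner ℂ u v : ℂ) = 0) (p q : ℂ) : ‖p•u + q•v‖^2 = ‖p‖^2 + ‖q‖^2 := by
  rw [@norm_add_sq ℂ]
  have h0 : (inner ℂ (p•u) (q•v) : ℂ) = 0 := by
    simp [inner_smul_left, inner_smul_right, huv]
  rw [h0]
  simp [norm_smul, hu, hv]

lemma bessel2 {n : ℕ} {u v x : EuclideanSpace ℂ (Fin n)} (hu : ‖u‖ = 1) (hv : ‖v‖ = 1)
    (huv : (inner ℂ u v : ℂ) = 0) :
    ‖(inner ℂ u x : ℂ)‖^2 + ‖(inner ℂ v x : ℂ)‖^2 ≤ ‖x‖^2 := by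
  have hvu : (inner ℂ v u : ℂ) = 0 := by rw [← inner_conj_symm, huv, map_zero]
  have huu : (inner ℂ u u : ℂ) = 1 := by rw [inner_self_eq_norm_sq_to_K, hu]; norm_num
  have hvv : (inner ℂ v v : ℂ) = 1 := by rw [inner_self_eq_norm_sq_to_K, hv]; norm_num
  set a : ℂ := inner ℂ u x with ha
  set b : ℂ := inner ℂ v x with hb
  set y : EuclideanSpace ℂ (Fin n) := x - a•u - b•v with hy
  have hx : x = (a•u + b•v) + y := by rw [hy]; abel
  have h0 : (inner ℂ (a•u + b•v) y : ℂ) = 0 := by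
    simp [hy, inner_add_left, inner_sub_right, inner_smul_left, inner_smul_right,
      huu, hvv, huv, hvu, ← ha, ← hb, hu, hv]
  calc ‖a‖^2 + ‖b‖^2 ≤ (‖a‖^2 + ‖b‖^2) + ‖y‖^2 := le_add_of_nonneg_right (by positivity)
    _ = ‖x‖^2 := by
        rw [hx, @norm_add_sq ℂ, h0, orth_expand hu hv huv]; simp

lemma rankone_diff_norm {n : ℕ} (u w : EuclideanSpace ℂ (Fin n)) (hu : ‖u‖ = 1) (hw : ‖w‖ = 1)
    (D : EuclideanSpace ℂ (Fin n) →L[ℂ] EuclideanSpace ℂ (Fin n))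
    (hD : ∀ x, D x = (inner ℂ w x : ℂ) • w - (inner ℂ u x : ℂ) • u) :
    ‖D‖ = Real.sqrt (1 - ‖(inner ℂ u w : ℂ)‖^2) := by
  set c : ℂ := inner ℂ u w with hc
  have huu : (inner ℂ u u : ℂ) = 1 := by rw [inner_self_eq_norm_sq_to_K, hu]; norm_num
  have hww : (inner ℂ w w : ℂ) = 1 := by rw [inner_self_eq_norm_sq_to_K, hw]; norm_num
  have hu0 : u ≠ 0 := by intro h; rw [h] at hu; simp at hu
  have hw0 : w ≠ 0 := by intro h; rw [h] at hw; simp at hw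
  have hcs : ‖c‖ ≤ 1 := by
    have := norm_inner_le_norm (𝕜 := ℂ) u w
    rwa [hu, hw, mul_one, ← hc] at this
  rcases eq_or_lt_of_le hcs with hc1 | hc1
  · -- ‖c‖ = 1 : w is a unit multiple of u, D = 0
    obtain ⟨r, hr0, hru⟩ := (norm_inner_eq_norm_iff hu0 hw0).1 (by rw [← hc, hc1, hu, hw]; ring)
    have hr1 : (starRingEnd ℂ) r * r = 1 := by
      have hr : ‖r‖ = 1 := by
        have := congrArg norm hru
        rw [norm_smul, hu, mul_one, hw] at this
        exact this.symm
      rw [Complex.conj_mul', hr]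
      norm_num
    have hD0 : D = 0 := by
      ext x
      rw [hD x, hru]
      simp only [inner_smul_left, smul_smul, ContinuousLinearMap.zero_apply]
      rw [show (starRingEnd ℂ) r * (inner ℂ u x : ℂ) * r = ((starRingEnd ℂ) r * r) * inner ℂ u x by ring,
        hr1, one_mul, sub_self]
    rw [hD0, hc1, norm_zero]
    norm_num
  · -- ‖c‖ < 1
    set w' : EuclideanSpace ℂ (Fin n) := w - c • u with hw'
    have huw' : (inner ℂ u w' : ℂ) = 0 := by
      simp [hw', inner_sub_right, inner_smul_right, huu, ← hc, hu]
    have hwu : (inner ℂ w u : ℂ) = (starRingEnd ℂ) c := by rw [← inner_conj_symm, ← hc]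
    have h1 : (inner ℂ w' w' : ℂ) = ((1 - ‖c‖^2 : ℝ) : ℂ) := by
      simp only [hw', inner_sub_left, inner_sub_right, inner_smul_left, inner_smul_right,
        huu, hww, hwu, ← hc]
      rw [show ((1:ℂ) - (starRingEnd ℂ) c * c - c * ((starRingEnd ℂ) c
        - (starRingEnd ℂ) c * 1)) = 1 - c * (starRingEnd ℂ) c by ring,
        Complex.mul_conj, Complex.normSq_eq_norm_sq]
      push_cast
      ring
    have hσ2 : ‖w'‖^2 = 1 - ‖c‖^2 := by
      have h2 := @inner_self_eq_norm_sq ℂ _ _ _ _ w'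
      rw [h1] at h2
      simpa [← Complex.ofReal_pow] using h2.symm
    set σ : ℝ := ‖w'‖ with hσ
    have hσpos : 0 < σ := by
      have h3 : 0 < σ^2 := by rw [hσ2]; nlinarith [hc1, norm_nonneg c]
      cases' (norm_nonneg w').lt_or_eq with h h
      · exact h
      · exfalso; rw [hσ, ← h] at h3; simp at h3
    have hσC : ((σ:ℂ)) ≠ 0 := by exact_mod_cast hσpos.ne'
    set v : EuclideanSpace ℂ (Fin n) := ((σ:ℂ))⁻¹ • w' with hv'
    have hv : ‖v‖ = 1 := by
      rw [hv', norm_smul]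
      simp [← hσ, hσpos.ne']
      rw [abs_of_pos hσpos]
      exact inv_mul_cancel₀ hσpos.ne'
    have huv : (inner ℂ u v : ℂ) = 0 := by simp [hv', inner_smul_right, huw']
    have hvu : (inner ℂ v u : ℂ) = 0 := by rw [← inner_conj_symm, huv, map_zero]
    have hwdec : w = c • u + ((σ:ℂ)) • v := by
      rw [hv', smul_inv_smul₀ hσC, hw']; abel
    have hDx : ∀ x, ‖D x‖^2 = σ^2 * (‖(inner ℂ u x : ℂ)‖^2 + ‖(inner ℂ v x : ℂ)‖^2) := by
      intro x
      set a : ℂ := inner ℂ u x with ha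
      set β : ℂ := inner ℂ v x with hβ
      have hb : (inner ℂ w x : ℂ) = (starRingEnd ℂ) c * a + (σ:ℂ)*β := by
        rw [hwdec, inner_add_left, inner_smul_left, inner_smul_left, Complex.conj_ofReal,
          ← ha, ← hβ]
      have hDxe : D x = (((starRingEnd ℂ) c * a + (σ:ℂ)*β)*c - a) • u
          + ((((starRingEnd ℂ) c * a + (σ:ℂ)*β))*(σ:ℂ)) • v := by
        rw [hD x, hb, hwdec]
        module
      rw [hDxe, orth_expand hu hv huv, calc1 a β c σ hσ2]
    have hub : ‖D‖ ≤ σ := by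
      apply ContinuousLinearMap.opNorm_le_bound D hσpos.le
      intro x
      have h2 : ‖D x‖^2 ≤ (σ*‖x‖)^2 := by
        rw [hDx x, mul_pow]
        exact mul_le_mul_of_nonneg_left (bessel2 hu hv huv) (sq_nonneg σ)
      have := Real.sqrt_le_sqrt h2
      rwa [Real.sqrt_sq (norm_nonneg _), Real.sqrt_sq (by positivity)] at this
    have hDu : ‖D u‖ = σ := by
      have h2 : ‖D u‖^2 = σ^2 := by
        rw [hDx u, huu, hvu]
        simp
      have := congrArg Real.sqrt h2
      rwa [Real.sqrt_sq (norm_nonneg _), Real.sqrt_sq hσpos.le] at this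
    have hlb : σ ≤ ‖D‖ := by
      have := D.le_opNorm u
      rw [hDu, hu, mul_one] at this
      exact this
    have : ‖D‖ = σ := le_antisymm hub hlb
    rw [this, ← Real.sqrt_sq hσpos.le, hσ2]

theorem stmt3 (n : ℕ) (x₀ x₁ x₂ : EuclideanSpace ℂ (Fin n))
    (h₀ : ‖x₀‖ = 1) (h₁ : ‖x₁‖ = 1) (h₂ : ‖x₂‖ = 1)
    (z₁ z₂ z₃ : ℂ)
    (hz₁ : z₁ = inner ℂ x₁ x₂) (hz₂ : z₂ = inner ℂ x₀ x₁) (hz₃ : z₃ = inner ℂ x₀ x₂)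
    (hz₁lt : ‖z₁‖ < 1) (hz₂lt : ‖z₂‖ < 1) :
    ‖projCLM (Submodule.span ℂ {x₁, x₂}) - projCLM (Submodule.span ℂ {x₀, x₁})‖ =
      Real.sqrt (1 - ‖z₁ * z₂ - z₃‖ ^ 2 / ((1 - ‖z₁‖ ^ 2) * (1 - ‖z₂‖ ^ 2))) := by
  have h11 : (inner ℂ x₁ x₁ : ℂ) = 1 := by rw [inner_self_eq_norm_sq_to_K, h₁]; norm_num
  have h00 : (inner ℂ x₀ x₀ : ℂ) = 1 := by rw [inner_self_eq_norm_sq_to_K, h₀]; norm_num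
  have h22 : (inner ℂ x₂ x₂ : ℂ) = 1 := by rw [inner_self_eq_norm_sq_to_K, h₂]; norm_num
  have h10 : (inner ℂ x₁ x₀ : ℂ) = (starRingEnd ℂ) z₂ := by rw [← inner_conj_symm, ← hz₂]
  have h21 : (inner ℂ x₂ x₁ : ℂ) = (starRingEnd ℂ) z₁ := by rw [← inner_conj_symm, ← hz₁]
  have h20 : (inner ℂ x₂ x₀ : ℂ) = (starRingEnd ℂ) z₃ := by rw [← inner_conj_symm, ← hz₃]
  -- the orthogonal complements of x₁ inside each plane
  set u' : EuclideanSpace ℂ (Fin n) := x₀ - (starRingEnd ℂ) z₂ • x₁ with hu'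
  set w' : EuclideanSpace ℂ (Fin n) := x₂ - z₁ • x₁ with hw'
  have h1u' : (inner ℂ x₁ u' : ℂ) = 0 := by
    simp [hu', inner_sub_right, inner_smul_right, h11, h10, h₁]
  have h1w' : (inner ℂ x₁ w' : ℂ) = 0 := by
    simp [hw', inner_sub_right, inner_smul_right, h11, ← hz₁, h₁]
  have hmc2 : z₂ * (starRingEnd ℂ) z₂ = ((‖z₂‖^2 : ℝ) : ℂ) := by
    rw [Complex.mul_conj, Complex.normSq_eq_norm_sq]
  have hmc1 : z₁ * (starRingEnd ℂ) z₁ = ((‖z₁‖^2 : ℝ) : ℂ) := by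
    rw [Complex.mul_conj, Complex.normSq_eq_norm_sq]
  push_cast at hmc1 hmc2
  have hu'n : ‖u'‖^2 = 1 - ‖z₂‖^2 := by
    have e1 : (inner ℂ u' u' : ℂ) = ((1 - ‖z₂‖^2 : ℝ) : ℂ) := by
      simp only [hu', inner_sub_left, inner_sub_right, inner_smul_left, inner_smul_right,
        h11, h00, h10, ← hz₂, Complex.conj_conj]
      push_cast
      linear_combination (-1 : ℂ) * hmc2
    have h2 := @inner_self_eq_norm_sq ℂ _ _ _ _ u'
    rw [e1] at h2
    simpa [← Complex.ofReal_pow] using h2.symm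
  have hw'n : ‖w'‖^2 = 1 - ‖z₁‖^2 := by
    have e1 : (inner ℂ w' w' : ℂ) = ((1 - ‖z₁‖^2 : ℝ) : ℂ) := by
      simp only [hw', inner_sub_left, inner_sub_right, inner_smul_left, inner_smul_right,
        h11, h22, h21, ← hz₁, Complex.conj_conj]
      push_cast
      linear_combination (-1 : ℂ) * hmc1
    have h2 := @inner_self_eq_norm_sq ℂ _ _ _ _ w'
    rw [e1] at h2
    simpa [← Complex.ofReal_pow] using h2.symm
  have hinner : (inner ℂ u' w' : ℂ) = z₃ - z₁ * z₂ := by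
    simp only [hu', hw', inner_sub_left, inner_sub_right, inner_smul_left, inner_smul_right,
      h11, h10, ← hz₁, ← hz₂, ← hz₃, Complex.conj_conj]
    ring
  have hu'pos : 0 < ‖u'‖ := by
    have h3 : 0 < ‖u'‖^2 := by rw [hu'n]; nlinarith [hz₂lt, norm_nonneg z₂]
    cases' (norm_nonneg u').lt_or_eq with h h
    · exact h
    · exfalso; rw [← h] at h3; simp at h3
  have hw'pos : 0 < ‖w'‖ := by
    have h3 : 0 < ‖w'‖^2 := by rw [hw'n]; nlinarith [hz₁lt, norm_nonneg z₁]
    cases' (norm_nonneg w').lt_or_eq with h h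
    · exact h
    · exfalso; rw [← h] at h3; simp at h3
  have hu'C : ((‖u'‖:ℝ) : ℂ) ≠ 0 := by exact_mod_cast hu'pos.ne'
  have hw'C : ((‖w'‖:ℝ) : ℂ) ≠ 0 := by exact_mod_cast hw'pos.ne'
  set U : EuclideanSpace ℂ (Fin n) := ((‖u'‖:ℝ) : ℂ)⁻¹ • u' with hU
  set W : EuclideanSpace ℂ (Fin n) := ((‖w'‖:ℝ) : ℂ)⁻¹ • w' with hW
  have hUn : ‖U‖ = 1 := by
    rw [hU, norm_smul]
    simp only [norm_inv, Complex.norm_real, Real.norm_eq_abs, abs_of_pos hu'pos]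
    exact inv_mul_cancel₀ hu'pos.ne'
  have hWn : ‖W‖ = 1 := by
    rw [hW, norm_smul]
    simp only [norm_inv, Complex.norm_real, Real.norm_eq_abs, abs_of_pos hw'pos]
    exact inv_mul_cancel₀ hw'pos.ne'
  have h1U : (inner ℂ x₁ U : ℂ) = 0 := by simp [hU, inner_smul_right, h1u']
  have h1W : (inner ℂ x₁ W : ℂ) = 0 := by simp [hW, inner_smul_right, h1w']
  have hspan₁ : Submodule.span ℂ {x₀, x₁} = Submodule.span ℂ {x₁, U} := by
    apply le_antisymm
    · rw [Submodule.span_le, Set.insert_subset_iff, Set.singleton_subset_iff]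
      constructor
      · apply Submodule.mem_span_pair.2
        refine ⟨(starRingEnd ℂ) z₂, ((‖u'‖:ℝ) : ℂ), ?_⟩
        rw [hU, smul_inv_smul₀ hu'C, hu']
        abel
      · exact Submodule.subset_span (Set.mem_insert _ _)
    · rw [Submodule.span_le, Set.insert_subset_iff, Set.singleton_subset_iff]
      constructor
      · exact Submodule.subset_span (Set.mem_insert_of_mem _ rfl)
      · apply Submodule.mem_span_pair.2
        refine ⟨((‖u'‖:ℝ) : ℂ)⁻¹, -(((‖u'‖:ℝ) : ℂ)⁻¹ * (starRingEnd ℂ) z₂), ?_⟩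
        rw [hU, hu']
        module
  have hspan₂ : Submodule.span ℂ {x₁, x₂} = Submodule.span ℂ {x₁, W} := by
    apply le_antisymm
    · rw [Submodule.span_le, Set.insert_subset_iff, Set.singleton_subset_iff]
      constructor
      · exact Submodule.subset_span (Set.mem_insert _ _)
      · apply Submodule.mem_span_pair.2
        refine ⟨z₁, ((‖w'‖:ℝ) : ℂ), ?_⟩
        rw [hW, smul_inv_smul₀ hw'C, hw']
        abel
    · rw [Submodule.span_le, Set.insert_subset_iff, Set.singleton_subset_iff]
      constructor
      · exact Submodule.subset_span (Set.mem_insert _ _)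
      · apply Submodule.mem_span_pair.2
        refine ⟨-(((‖w'‖:ℝ) : ℂ)⁻¹ * z₁), ((‖w'‖:ℝ) : ℂ)⁻¹, ?_⟩
        rw [hW, hw']
        module
  have hD : ∀ x, (projCLM (Submodule.span ℂ {x₁, x₂}) - projCLM (Submodule.span ℂ {x₀, x₁})) x
      = (inner ℂ W x : ℂ) • W - (inner ℂ U x : ℂ) • U := by
    intro x
    rw [ContinuousLinearMap.sub_apply, hspan₁, hspan₂, proj_pair h₁ hWn h1W x,
      proj_pair h₁ hUn h1U x]
    abel
  rw [rankone_diff_norm U W hUn hWn _ hD]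
  congr 1
  have hUW : (inner ℂ U W : ℂ) = (((‖u'‖:ℝ) : ℂ))⁻¹ * (((‖w'‖:ℝ) : ℂ))⁻¹ * (z₃ - z₁ * z₂) := by
    rw [hU, hW, inner_smul_left, inner_smul_right, hinner, map_inv₀, Complex.conj_ofReal]
    ring
  have hn : ‖(inner ℂ U W : ℂ)‖^2 = ‖z₁ * z₂ - z₃‖^2 / ((1 - ‖z₁‖^2) * (1 - ‖z₂‖^2)) := by
    rw [hUW]
    rw [norm_mul, norm_mul, norm_inv, norm_inv, Complex.norm_real, Complex.norm_real,
      Real.norm_eq_abs, Real.norm_eq_abs, abs_of_pos hu'pos, abs_of_pos hw'pos, norm_sub_rev z₃ (z₁ * z₂)]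
    rw [mul_pow, mul_pow, inv_pow, inv_pow, hu'n, hw'n]
    field_simp
  rw [hn]
end
end

section
/- Let x₀, x₁, x₂ ∈ ℂⁿ be unit vectors with z₁ = ⟨x₂,x₁⟩, z₂ = ⟨x₁,x₀⟩, z₃ = ⟨x₂,x₀⟩, and assume |z₁| < 1 and |z₂| < 1. Let P̂₁ be the orthogonal projection matrix onto span_ℂ{x₀,x₁} and P̂₂ the orthogonal projection matrix onto span_ℂ{x₁,x₂}, and set P̂ = P̂₂ − P̂₁. Then P̂³ = (1 − |z₁z₂ − z₃|² / ((1 − |z₁|²)(1 − |z₂|²)))·P̂. -/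
noncomputable section

open scoped ComplexConjugate

local notation "⟪" x ", " y "⟫" => @inner ℂ _ _ x y

lemma projCLM_apply {n : ℕ} (K : Submodule ℂ (EuclideanSpace ℂ (Fin n)))
    (v : EuclideanSpace ℂ (Fin n)) :
    projCLM K v = K.starProjection v := rfl

lemma projCLM_sup {n : ℕ} (K L : Submodule ℂ (EuclideanSpace ℂ (Fin n)))
    (h : ∀ x ∈ K, ∀ y ∈ L, ⟪x, y⟫ = 0) :
    projCLM (K ⊔ L) = projCLM K + projCLM L := by
  refine ContinuousLinearMap.ext fun v => ?_
  have hK : (projCLM K v) ∈ K := (K.orthogonalProjection v).2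
  have hL : (projCLM L v) ∈ L := (L.orthogonalProjection v).2
  have hm : projCLM K v + projCLM L v ∈ K ⊔ L := Submodule.add_mem_sup hK hL
  have hKo : v - projCLM K v ∈ Kᗮ := Submodule.sub_starProjection_mem_orthogonal (K := K) v
  have hLo : v - projCLM L v ∈ Lᗮ := Submodule.sub_starProjection_mem_orthogonal (K := L) v
  have hLK : projCLM L v ∈ Kᗮ := fun x hx => h x hx _ hL
  have hKL : projCLM K v ∈ Lᗮ := by
    intro y hy
    rw [← inner_conj_symm]
    simp [h _ hK _ hy]
  have ho : v - (projCLM K v + projCLM L v) ∈ (K ⊔ L)ᗮ := by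
    rw [← Submodule.inf_orthogonal]
    refine Submodule.mem_inf.2 ⟨?_, ?_⟩
    · have := Kᗮ.sub_mem hKo hLK
      convert this using 1
      abel
    · have := Lᗮ.sub_mem hLo hKL
      convert this using 1
      abel
  have := Submodule.eq_starProjection_of_mem_orthogonal (K := K ⊔ L) hm ho
  simpa [projCLM_apply] using this

lemma projCLM_singleton_apply {n : ℕ} (w v : EuclideanSpace ℂ (Fin n)) :
    projCLM (ℂ ∙ w) v = (⟪w, v⟫ / ((‖w‖ ^ 2 : ℝ) : ℂ)) • w := by
  rw [projCLM_apply]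
  exact Submodule.starProjection_singleton (𝕜 := ℂ) v

set_option maxHeartbeats 1600000 in
theorem stmt7 (n : ℕ) (x₀ x₁ x₂ : EuclideanSpace ℂ (Fin n))
    (h₀ : ‖x₀‖ = 1) (h₁ : ‖x₁‖ = 1) (h₂ : ‖x₂‖ = 1)
    (z₁ z₂ z₃ : ℂ)
    (hz₁ : z₁ = inner ℂ x₁ x₂) (hz₂ : z₂ = inner ℂ x₀ x₁) (hz₃ : z₃ = inner ℂ x₀ x₂)
    (hz₁lt : ‖z₁‖ < 1) (hz₂lt : ‖z₂‖ < 1)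
    (P : EuclideanSpace ℂ (Fin n) →L[ℂ] EuclideanSpace ℂ (Fin n))
    (hP : P = projCLM (Submodule.span ℂ {x₁, x₂}) - projCLM (Submodule.span ℂ {x₀, x₁})) :
    P ^ 3 =
      ((1 - ‖z₁ * z₂ - z₃‖ ^ 2 / ((1 - ‖z₁‖ ^ 2) * (1 - ‖z₂‖ ^ 2)) : ℝ) : ℂ) • P := by
  have hzz : ∀ z : ℂ, z * conj z = ((‖z‖ ^ 2 : ℝ) : ℂ) := fun z => by
    rw [RCLike.mul_conj]; norm_cast
  set w₁ : EuclideanSpace ℂ (Fin n) := x₀ - (conj z₂) • x₁ with hw₁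
  set w₂ : EuclideanSpace ℂ (Fin n) := x₂ - z₁ • x₁ with hw₂
  have hx00 : ⟪x₀, x₀⟫ = 1 := by
    rw [inner_self_eq_norm_sq_to_K, h₀]; norm_num
  have hx11 : ⟪x₁, x₁⟫ = 1 := by
    rw [inner_self_eq_norm_sq_to_K, h₁]; norm_num
  have hx22 : ⟪x₂, x₂⟫ = 1 := by
    rw [inner_self_eq_norm_sq_to_K, h₂]; norm_num
  have hx12 : ⟪x₁, x₂⟫ = z₁ := hz₁.symm
  have hx01 : ⟪x₀, x₁⟫ = z₂ := hz₂.symm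
  have hx02 : ⟪x₀, x₂⟫ = z₃ := hz₃.symm
  have hx10 : ⟪x₁, x₀⟫ = conj z₂ := by rw [← inner_conj_symm, hx01]
  have hx21 : ⟪x₂, x₁⟫ = conj z₁ := by rw [← inner_conj_symm, hx12]
  -- orthogonality
  have h1w1 : ⟪x₁, w₁⟫ = 0 := by
    simp [hw₁, inner_sub_right, inner_smul_right, hx10, hx11, h₁]
  have h1w2 : ⟪x₁, w₂⟫ = 0 := by
    simp [hw₂, inner_sub_right, inner_smul_right, hx12, hx11, h₁]
  set g : ℂ := z₃ - z₁ * z₂ with hg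
  have hw12 : ⟪w₁, w₂⟫ = g := by
    simp only [hw₁, hw₂, inner_sub_right, inner_sub_left, inner_smul_right, inner_smul_left,
      hx02, hx01, hx12, hx11, Complex.conj_conj]
    rw [hg]; ring
  have hw21 : ⟪w₂, w₁⟫ = conj g := by rw [← inner_conj_symm, hw12]
  set n1 : ℂ := ((‖w₁‖ ^ 2 : ℝ) : ℂ) with hn1def
  set n2 : ℂ := ((‖w₂‖ ^ 2 : ℝ) : ℂ) with hn2def
  have hw11 : ⟪w₁, w₁⟫ = n1 := by
    rw [hn1def, inner_self_eq_norm_sq_to_K]; norm_cast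
  have hw22 : ⟪w₂, w₂⟫ = n2 := by
    rw [hn2def, inner_self_eq_norm_sq_to_K]; norm_cast
  have hn1 : n1 = 1 - ((‖z₂‖ ^ 2 : ℝ) : ℂ) := by
    rw [← hw11]
    have e : ⟪w₁, w₁⟫ = 1 - z₂ * conj z₂ := by
      simp only [hw₁, inner_sub_right, inner_sub_left, inner_smul_right, inner_smul_left,
        hx00, hx01, hx10, hx11, Complex.conj_conj]
      ring
    rw [e, hzz]
  have hn2 : n2 = 1 - ((‖z₁‖ ^ 2 : ℝ) : ℂ) := by
    rw [← hw22]
    have e : ⟪w₂, w₂⟫ = 1 - z₁ * conj z₁ := by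
      simp only [hw₂, inner_sub_right, inner_sub_left, inner_smul_right, inner_smul_left,
        hx22, hx12, hx21, hx11]
      ring
    rw [e, hzz]
  have hn1r : (0 : ℝ) < 1 - ‖z₂‖ ^ 2 := by nlinarith [norm_nonneg z₂]
  have hn2r : (0 : ℝ) < 1 - ‖z₁‖ ^ 2 := by nlinarith [norm_nonneg z₁]
  have hn1ne : n1 ≠ 0 := by
    rw [hn1, show (1 : ℂ) - ((‖z₂‖ ^ 2 : ℝ) : ℂ) = (((1 - ‖z₂‖ ^ 2 : ℝ)) : ℂ) by push_cast; ring]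
    exact_mod_cast ne_of_gt hn1r
  have hn2ne : n2 ≠ 0 := by
    rw [hn2, show (1 : ℂ) - ((‖z₁‖ ^ 2 : ℝ) : ℂ) = (((1 - ‖z₁‖ ^ 2 : ℝ)) : ℂ) by push_cast; ring]
    exact_mod_cast ne_of_gt hn2r
  -- span decompositions
  have hx0mem : x₀ ∈ Submodule.span ℂ ({x₀, x₁} : Set (EuclideanSpace ℂ (Fin n))) :=
    Submodule.subset_span (Set.mem_insert _ _)
  have hx1mem : x₁ ∈ Submodule.span ℂ ({x₀, x₁} : Set (EuclideanSpace ℂ (Fin n))) :=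
    Submodule.subset_span (Set.mem_insert_of_mem _ rfl)
  have hx1mem' : x₁ ∈ Submodule.span ℂ ({x₁, x₂} : Set (EuclideanSpace ℂ (Fin n))) :=
    Submodule.subset_span (Set.mem_insert _ _)
  have hx2mem : x₂ ∈ Submodule.span ℂ ({x₁, x₂} : Set (EuclideanSpace ℂ (Fin n))) :=
    Submodule.subset_span (Set.mem_insert_of_mem _ rfl)
  have hspan1 : Submodule.span ℂ {x₀, x₁} = (ℂ ∙ x₁) ⊔ (ℂ ∙ w₁) := by
    apply le_antisymm
    · rw [Submodule.span_le]
      intro y hy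
      simp only [Set.mem_insert_iff, Set.mem_singleton_iff] at hy
      rcases hy with rfl | rfl
      · have hx0 : y = (conj z₂) • x₁ + w₁ := by rw [hw₁]; abel
        rw [hx0]
        exact Submodule.add_mem _
          (Submodule.mem_sup_left (Submodule.smul_mem _ _ (Submodule.mem_span_singleton_self x₁)))
          (Submodule.mem_sup_right (Submodule.mem_span_singleton_self w₁))
      · exact Submodule.mem_sup_left (Submodule.mem_span_singleton_self y)
    · rw [sup_le_iff, Submodule.span_singleton_le_iff_mem, Submodule.span_singleton_le_iff_mem]
      exact ⟨hx1mem, Submodule.sub_mem _ hx0mem (Submodule.smul_mem _ _ hx1mem)⟩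
  have hspan2 : Submodule.span ℂ {x₁, x₂} = (ℂ ∙ x₁) ⊔ (ℂ ∙ w₂) := by
    apply le_antisymm
    · rw [Submodule.span_le]
      intro y hy
      simp only [Set.mem_insert_iff, Set.mem_singleton_iff] at hy
      rcases hy with rfl | rfl
      · exact Submodule.mem_sup_left (Submodule.mem_span_singleton_self y)
      · have hx2 : y = z₁ • x₁ + w₂ := by rw [hw₂]; abel
        rw [hx2]
        exact Submodule.add_mem _
          (Submodule.mem_sup_left (Submodule.smul_mem _ _ (Submodule.mem_span_singleton_self x₁)))
          (Submodule.mem_sup_right (Submodule.mem_span_singleton_self w₂))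
    · rw [sup_le_iff, Submodule.span_singleton_le_iff_mem, Submodule.span_singleton_le_iff_mem]
      exact ⟨hx1mem', Submodule.sub_mem _ hx2mem (Submodule.smul_mem _ _ hx1mem')⟩
  have hortho1 : ∀ x ∈ (ℂ ∙ x₁), ∀ y ∈ (ℂ ∙ w₁), ⟪x, y⟫ = 0 := by
    intro x hx y hy
    obtain ⟨a, rfl⟩ := Submodule.mem_span_singleton.1 hx
    obtain ⟨b, rfl⟩ := Submodule.mem_span_singleton.1 hy
    simp [inner_smul_left, inner_smul_right, h1w1]
  have hortho2 : ∀ x ∈ (ℂ ∙ x₁), ∀ y ∈ (ℂ ∙ w₂), ⟪x, y⟫ = 0 := by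
    intro x hx y hy
    obtain ⟨a, rfl⟩ := Submodule.mem_span_singleton.1 hx
    obtain ⟨b, rfl⟩ := Submodule.mem_span_singleton.1 hy
    simp [inner_smul_left, inner_smul_right, h1w2]
  have hPf : ∀ v, P v = (⟪w₂, v⟫ / n2) • w₂ - (⟪w₁, v⟫ / n1) • w₁ := by
    intro v
    rw [hP, hspan1, hspan2, projCLM_sup _ _ hortho2, projCLM_sup _ _ hortho1]
    simp only [ContinuousLinearMap.sub_apply, ContinuousLinearMap.add_apply,
      projCLM_singleton_apply, hn1def, hn2def]
    abel
  -- scalar identity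
  have hgnorm : ((‖z₁ * z₂ - z₃‖ ^ 2 : ℝ) : ℂ) = g * conj g := by
    rw [hzz g]
    exact congrArg _ (congrArg (· ^ 2) (by rw [hg, norm_sub_rev]))
  have hc : ((1 - ‖z₁ * z₂ - z₃‖ ^ 2 / ((1 - ‖z₁‖ ^ 2) * (1 - ‖z₂‖ ^ 2)) : ℝ) : ℂ)
      = 1 - (g * conj g) / (n2 * n1) := by
    rw [hn1, hn2, ← hgnorm]
    push_cast
    ring
  refine ContinuousLinearMap.ext fun v => ?_
  have hp3 : (P ^ 3) v = P (P (P v)) := by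
    rw [pow_succ, pow_succ, pow_one]
    rfl
  rw [hp3, ContinuousLinearMap.smul_apply, hc]
  simp only [hPf, inner_sub_right, inner_smul_right, hw11, hw22, hw12, hw21]
  set a : ℂ := ⟪w₁, v⟫ with ha
  set b : ℂ := ⟪w₂, v⟫ with hb
  clear_value a b
  clear hP hPf hw11 hw22 hw12 hw21 hn1 hn2 hc hn1def hn2def hg hw₁ hw₂ ha hb hzz
  clear_value w₁ w₂ g n1 n2
  match_scalars
  · field_simp
    ring
  · field_simp
    ring
end
end

section
/- Let A ∈ ℂ^{n×n} and suppose v₁, …, vₙ is a basis of ℂⁿ with A vⱼ = λⱼ vⱼ for each j, where λₙ is real and nonzero and |λⱼ| < |λₙ| for all j < n. Let x₀ = Σⱼ cⱼ vⱼ with cₙ ≠ 0, and set x_k = Aᵏx₀/‖Aᵏx₀‖. Then |⟨x_k, x_{k−1}⟩| → 1 as k → ∞; equivalently, the successive subspace distance ď_k = √(1 − |⟨x_k, x_{k−1}⟩|²) converges to 0. -/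
open Matrix Filter

noncomputable section

lemma toEuclideanLin_mul_apply {m : ℕ} (A B : Matrix (Fin m) (Fin m) ℂ)
    (v : EuclideanSpace ℂ (Fin m)) :
    Matrix.toEuclideanLin (A * B) v = Matrix.toEuclideanLin A (Matrix.toEuclideanLin B v) := by
  simp [Matrix.toEuclideanLin_apply, Matrix.mulVec_mulVec]

lemma aux_ratio (p q u v X : ℝ) (hp : p ≠ 0) (hq : q ≠ 0) (hu : u ≠ 0) (hv : v ≠ 0) :
    (p * u)⁻¹ * ((q * v)⁻¹ * (p * (q * X))) = X / (u * v) := by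
  field_simp

theorem stmt10 (n : ℕ) (A : Matrix (Fin (n + 1)) (Fin (n + 1)) ℂ)
    (b : Module.Basis (Fin (n + 1)) ℂ (EuclideanSpace ℂ (Fin (n + 1))))
    (lam : Fin (n + 1) → ℂ)
    (heig : ∀ j, Matrix.toEuclideanLin A (b j) = lam j • b j)
    (hreal : (lam (Fin.last n)).im = 0) (hne : lam (Fin.last n) ≠ 0)
    (hdom : ∀ j, j ≠ Fin.last n → ‖lam j‖ < ‖lam (Fin.last n)‖)
    (x₀ : EuclideanSpace ℂ (Fin (n + 1)))
    (hc : b.repr x₀ (Fin.last n) ≠ 0)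
    (x : ℕ → EuclideanSpace ℂ (Fin (n + 1)))
    (hx : ∀ k, x k = (‖Matrix.toEuclideanLin (A ^ k) x₀‖ : ℂ)⁻¹ •
      Matrix.toEuclideanLin (A ^ k) x₀) :
    Tendsto (fun k : ℕ => ‖(inner ℂ (x k) (x (k + 1)) : ℂ)‖) atTop (nhds 1) ∧
    Tendsto (fun k : ℕ => Real.sqrt (1 - ‖(inner ℂ (x k) (x (k + 1)) : ℂ)‖ ^ 2)) atTop
      (nhds 0) := by
  set lamN := lam (Fin.last n) with hlamN
  set c : Fin (n + 1) → ℂ := fun j => b.repr x₀ j with hcdef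
  -- formula for A^k x₀
  have key : ∀ k : ℕ, Matrix.toEuclideanLin (A ^ k) x₀
      = ∑ j, (c j * lam j ^ k) • b j := by
    intro k
    induction k with
    | zero =>
      simp only [pow_zero, one_mul, mul_one]
      rw [show Matrix.toEuclideanLin (1 : Matrix (Fin (n+1)) (Fin (n+1)) ℂ) x₀ = x₀ by
        simp [Matrix.toEuclideanLin_apply]]
      exact (b.sum_repr x₀).symm
    | succ k ih =>
      rw [pow_succ', toEuclideanLin_mul_apply, ih, map_sum]
      refine Finset.sum_congr rfl fun j _ => ?_
      rw [LinearMap.map_smul, heig j, smul_smul, pow_succ]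
      ring_nf
  -- normalized sequence
  set y : ℕ → EuclideanSpace ℂ (Fin (n + 1)) :=
    fun k => ∑ j, (c j * (lam j / lamN) ^ k) • b j with hy
  have hT : ∀ k : ℕ, Matrix.toEuclideanLin (A ^ k) x₀ = lamN ^ k • y k := by
    intro k
    rw [key k, hy, Finset.smul_sum]
    refine Finset.sum_congr rfl fun j _ => ?_
    rw [smul_smul, div_pow, mul_comm (lamN ^ k), mul_assoc,
      div_mul_cancel₀ _ (pow_ne_zero k hne)]
  have hyne : ∀ k, y k ≠ 0 := by
    intro k h
    apply hc
    have : b.repr (y k) (Fin.last n) = c (Fin.last n) * (lamN / lamN) ^ k := by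
      rw [hy]
      exact congrFun (b.repr_sum_self (fun j => c j * (lam j / lamN) ^ k)) (Fin.last n)
    rw [h, map_zero] at this
    have h2 : c (Fin.last n) * (lamN / lamN) ^ k = 0 := by
      simpa using this.symm
    rw [div_self hne, one_pow, mul_one] at h2
    exact h2
  have hynorm : ∀ k, ‖y k‖ ≠ 0 := fun k => norm_ne_zero_iff.mpr (hyne k)
  -- limit of y
  set w : EuclideanSpace ℂ (Fin (n + 1)) := c (Fin.last n) • b (Fin.last n) with hw
  have hwne : w ≠ 0 := smul_ne_zero hc (b.ne_zero _)
  have hwnorm : ‖w‖ ≠ 0 := norm_ne_zero_iff.mpr hwne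
  have ylim : Tendsto y atTop (nhds w) := by
    have : w = ∑ j, (if j = Fin.last n then c j • b j else 0) := by
      rw [Finset.sum_ite_eq' Finset.univ (Fin.last n) (fun j => c j • b j)]
      simp [hw]
    rw [this]
    refine tendsto_finset_sum _ fun j _ => ?_
    by_cases hj : j = Fin.last n
    · subst hj
      simp only [if_pos rfl, if_true, ← hlamN, div_self hne, one_pow, mul_one]
      exact tendsto_const_nhds
    · simp only [if_neg hj]
      have hlt : ‖lam j / lamN‖ < 1 := by
        rw [norm_div, div_lt_one (norm_pos_iff.mpr hne)]
        exact hdom j hj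
      have h0 : Tendsto (fun k : ℕ => (lam j / lamN) ^ k) atTop (nhds 0) :=
        tendsto_pow_atTop_nhds_zero_of_norm_lt_one hlt
      have := ((tendsto_const_nhds.mul h0).smul_const (b j) :
        Tendsto (fun k : ℕ => (c j * (lam j / lamN) ^ k) • b j) atTop
          (nhds ((c j * 0) • b j)))
      simpa using this
  have ylim1 : Tendsto (fun k => y (k + 1)) atTop (nhds w) :=
    ylim.comp (tendsto_add_atTop_nat 1)
  -- the key identity
  have hid : ∀ k : ℕ, ‖(inner ℂ (x k) (x (k + 1)) : ℂ)‖
      = ‖(inner ℂ (y k) (y (k + 1)) : ℂ)‖ / (‖y k‖ * ‖y (k + 1)‖) := by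
    intro k
    have hN : ‖lamN‖ ≠ 0 := norm_ne_zero_iff.mpr hne
    rw [hx k, hx (k + 1), hT k, hT (k + 1), inner_smul_left, inner_smul_right,
      inner_smul_left, inner_smul_right]
    simp only [norm_mul, RCLike.norm_conj, norm_inv, Complex.norm_real,
      Real.norm_eq_abs, abs_norm, norm_smul, norm_pow, abs_mul, abs_pow]
    exact aux_ratio _ _ _ _ _ (pow_ne_zero k hN) (pow_ne_zero (k + 1) hN)
      (hynorm k) (hynorm (k + 1))
  -- first limit
  have hlim1 : Tendsto (fun k : ℕ => ‖(inner ℂ (x k) (x (k + 1)) : ℂ)‖) atTop (nhds 1) := by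
    have hinner : Tendsto (fun k : ℕ => (inner ℂ (y k) (y (k + 1)) : ℂ)) atTop
        (nhds (inner ℂ w w)) := ylim.inner ylim1
    have hnum : Tendsto (fun k : ℕ => ‖(inner ℂ (y k) (y (k + 1)) : ℂ)‖) atTop
        (nhds ‖(inner ℂ w w : ℂ)‖) := hinner.norm
    have hden : Tendsto (fun k : ℕ => ‖y k‖ * ‖y (k + 1)‖) atTop
        (nhds (‖w‖ * ‖w‖)) := ylim.norm.mul ylim1.norm
    have hq := hnum.div hden (mul_ne_zero hwnorm hwnorm)
    have hval : ‖(inner ℂ w w : ℂ)‖ / (‖w‖ * ‖w‖) = 1 := by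
      rw [@inner_self_eq_norm_sq_to_K ℂ, div_eq_one_iff_eq (mul_ne_zero hwnorm hwnorm)]
      norm_cast
      rw [abs_of_nonneg (by positivity), sq]
    rw [hval] at hq
    refine hq.congr fun k => (hid k).symm
  refine ⟨hlim1, ?_⟩
  have h2 : Tendsto (fun k : ℕ => 1 - ‖(inner ℂ (x k) (x (k + 1)) : ℂ)‖ ^ 2) atTop
      (nhds (1 - 1 ^ 2)) := tendsto_const_nhds.sub (hlim1.pow 2)
  have := (Real.continuous_sqrt.tendsto (1 - 1 ^ 2)).comp h2
  simpa [Function.comp_def] using this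
end
end
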